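/- Let ℓ be a positive odd integer and ζ ∈ ℂ a primitive ℓ-th root of unity. Write a nonnegative integer n as n = ℓ n₁ + n₀ with 0 ≤ n₀ < ℓ, and similarly m = ℓ m₁ + m₀ with 0 ≤ m₀ < ℓ. Then the balanced Gaussian binomial evaluated at ζ satisfies [n choose m]_ζ = (n₁ choose m₁) · [n₀ choose m₀]_ζ whenever m₀ ≤ n₀, and [n choose m]_ζ = 0 if m ≤ n and m₀ > n₀. -/

import Mathlib

/-!
The polynomial `∏_{k<n} (1 + ζ^{n-1-2k} X)` has the balanced Gaussian binomials `[n choose m]_ζ`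
as coefficients: peeling off its factor `k = 0` reproduces the Pascal recursion of `qbinomC`.
Passing from `n` to `n + ℓ` multiplies it by `∏_{k<ℓ} (1 + a ξ^k X)` with `ξ = ζ^{-2}`, which is
again a primitive `ℓ`-th root of unity because `ℓ` is odd, and `a^ℓ = 1`; this product is
`1 + X^ℓ`. So the polynomial for `ℓ n₁ + n₀` is `(1 + X^ℓ)^{n₁}` times the one for `n₀`, whose
degree is `n₀ < ℓ`, and reading off the coefficient of `X^{ℓ m₁ + m₀}` gives the theorem.
-/

/-- The balanced Gaussian binomial `[n choose k]_ζ`, i.e. the evaluation at `q = ζ ∈ ℂˣ` of the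
Laurent polynomial `[n choose k]_q ∈ ℤ[q,q⁻¹]`, defined via the balanced Pascal recursion
`[n+1 choose k+1]_q = q^{-(k+1)} [n choose k+1]_q + q^{n-k} [n choose k]_q`. -/
noncomputable def qbinomC (ζ : ℂ) : ℕ → ℕ → ℂ
  | _, 0 => 1
  | 0, _ + 1 => 0
  | n + 1, k + 1 =>
      ζ⁻¹ ^ (k + 1) * qbinomC ζ n (k + 1) + ζ ^ (n - k) * qbinomC ζ n k

open Polynomial Finset

theorem qbinomC_zero_right (ζ : ℂ) (n : ℕ) : qbinomC ζ n 0 = 1 := by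
  cases n <;> rfl

theorem qbinomC_eq_zero_of_lt (ζ : ℂ) {n k : ℕ} (h : n < k) : qbinomC ζ n k = 0 := by
  induction n generalizing k with
  | zero => obtain ⟨k, rfl⟩ := Nat.exists_eq_succ_of_ne_zero h.ne'; rfl
  | succ n ih =>
    obtain ⟨k, rfl⟩ := Nat.exists_eq_succ_of_ne_zero (Nat.ne_zero_of_lt h)
    rw [qbinomC, ih (by omega), ih (by omega), mul_zero, mul_zero, add_zero]

theorem coeff_X_pow_add_one_pow_mul {R : Type*} [CommSemiring R] {ℓ : ℕ} {P : R[X]}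
    (hP : P.natDegree < ℓ) (a b : ℕ) {c : ℕ} (hc : c < ℓ) :
    ((X ^ ℓ + 1) ^ a * P).coeff (ℓ * b + c) = a.choose b * P.coeff c := by
  induction a generalizing b with
  | zero =>
    cases b with
    | zero => simp
    | succ b =>
      rw [pow_zero, one_mul, coeff_eq_zero_of_natDegree_lt (by nlinarith), Nat.choose_zero_succ,
        Nat.cast_zero, zero_mul]
  | succ a ih =>
    rw [pow_succ, mul_add_one, add_mul, mul_assoc, mul_left_comm, coeff_add, coeff_X_pow_mul']
    cases b with
    | zero => simpa [hc.not_ge] using ih 0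
    | succ b =>
      rw [if_pos (by nlinarith), show ℓ * (b + 1) + c - ℓ = ℓ * b + c by rw [mul_add_one]; omega,
        ih, ih, Nat.choose_succ_succ', Nat.cast_add, add_mul]

theorem prod_C_mul_X_add_one_eq_X_pow_add_one {K : Type*} [Field K] {ℓ : ℕ} (hodd : Odd ℓ)
    {ξ a : K} (hξ : IsPrimitiveRoot ξ ℓ) (ha : a ^ ℓ = 1) :
    ∏ k ∈ range ℓ, (C (a * ξ ^ k) * X + 1) = X ^ ℓ + 1 := by
  have hℓ := hodd.pos
  have hξ0 := hξ.ne_zero hℓ.ne'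
  have ha0 : a ≠ 0 := by rintro rfl; simp [zero_pow hℓ.ne'] at ha
  -- `∏ ξ ^ k = ξ ^ (ℓ (ℓ - 1) / 2)`, and `ℓ ∣ ℓ (ℓ - 1) / 2` because `ℓ` is odd.
  have hconst : ∏ k ∈ range ℓ, (a * ξ ^ k) = 1 := by
    obtain ⟨j, rfl⟩ := hodd
    rw [prod_mul_distrib, prod_const, card_range, prod_pow_eq_pow_sum, sum_range_id, ha,
      Nat.add_sub_cancel, mul_left_comm, Nat.mul_div_cancel_left _ two_pos, pow_mul,
      hξ.pow_eq_one, one_pow, one_mul]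
  have hroot : (-a⁻¹) ^ ℓ = -1 := by rw [hodd.neg_pow, inv_pow, ha, inv_one]
  calc ∏ k ∈ range ℓ, (C (a * ξ ^ k) * X + 1)
      = ∏ k ∈ range ℓ, C (a * ξ ^ k) * (X - C (ξ⁻¹ ^ k * -a⁻¹)) := by
        refine prod_congr rfl fun k _ => ?_
        have : a * ξ ^ k * (ξ⁻¹ ^ k * -a⁻¹) = -1 := by field_simp; simp [hξ0]
        rw [mul_sub, ← C_mul, this, C_neg, C_1, sub_neg_eq_add]
    _ = X ^ ℓ - C (-1) := by
        rw [prod_mul_distrib, ← map_prod, hconst, C_1, one_mul,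
          X_pow_sub_C_eq_prod hξ.inv hℓ hroot]
    _ = X ^ ℓ + 1 := by rw [C_neg, C_1, sub_neg_eq_add]

noncomputable def qbinomGen (ζ : ℂ) (n : ℕ) : ℂ[X] :=
  ∏ k ∈ range n, (C (ζ ^ ((n : ℤ) - 1 - 2 * k)) * X + 1)

theorem qbinomGen_succ {ζ : ℂ} (hζ : ζ ≠ 0) (n : ℕ) :
    qbinomGen ζ (n + 1) = (qbinomGen ζ n).comp (C ζ⁻¹ * X) * (C (ζ ^ n) * X + 1) := by
  rw [qbinomGen, prod_range_succ', qbinomGen, Polynomial.prod_comp]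
  congr 1
  · refine prod_congr rfl fun k _ => ?_
    have : ((n + 1 : ℕ) : ℤ) - 1 - 2 * ((k + 1 : ℕ) : ℤ) = (n : ℤ) - 1 - 2 * k - 1 := by
      push_cast; ring
    rw [this, zpow_sub_one₀ hζ, add_comp, mul_comp, C_comp, X_comp, one_comp, C_mul, mul_assoc]
  · simp

theorem coeff_qbinomGen {ζ : ℂ} (hζ : ζ ≠ 0) (n m : ℕ) :
    (qbinomGen ζ n).coeff m = qbinomC ζ n m := by
  induction n generalizing m with
  | zero => cases m <;> simp [qbinomGen, coeff_one, qbinomC]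
  | succ n ih =>
    rw [qbinomGen_succ hζ, mul_add_one, mul_left_comm, coeff_add, coeff_C_mul]
    cases m with
    | zero => simp [ih, qbinomC_zero_right]
    | succ k =>
      rw [coeff_mul_X, comp_C_mul_X_coeff, comp_C_mul_X_coeff, ih, ih, qbinomC]
      rcases le_or_gt k n with hkn | hkn
      · rw [pow_sub₀ ζ hζ hkn, inv_pow]; ring
      · rw [qbinomC_eq_zero_of_lt ζ hkn]; ring

theorem natDegree_qbinomGen_le {ζ : ℂ} (hζ : ζ ≠ 0) (n : ℕ) : (qbinomGen ζ n).natDegree ≤ n :=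
  natDegree_le_iff_coeff_eq_zero.mpr fun m hm => by
    rw [coeff_qbinomGen hζ]
    exact qbinomC_eq_zero_of_lt ζ (by exact_mod_cast hm)

theorem qbinomGen_add_period {ℓ : ℕ} (hodd : Odd ℓ) {ζ : ℂ} (hζ : IsPrimitiveRoot ζ ℓ) (n : ℕ) :
    qbinomGen ζ (n + ℓ) = (X ^ ℓ + 1) * qbinomGen ζ n := by
  have hζ0 := hζ.ne_zero hodd.pos.ne'
  rw [qbinomGen, add_comm n ℓ, prod_range_add, qbinomGen]
  congr 1
  · have hfactor (k : ℕ) : ζ ^ (((ℓ + n : ℕ) : ℤ) - 1 - 2 * k)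
        = ζ ^ (((ℓ + n : ℕ) : ℤ) - 1) * (ζ⁻¹ ^ 2) ^ k := by
      rw [← pow_mul, inv_pow, ← zpow_natCast, ← zpow_neg, ← zpow_add₀ hζ0]
      push_cast; ring_nf
    have ha : (ζ ^ (((ℓ + n : ℕ) : ℤ) - 1)) ^ ℓ = 1 := by
      rw [← zpow_natCast, ← zpow_mul, mul_comm, zpow_mul, zpow_natCast, hζ.pow_eq_one, one_zpow]
    simp only [hfactor]
    exact prod_C_mul_X_add_one_eq_X_pow_add_one hodd
      (hζ.inv.pow_of_coprime 2 (Nat.coprime_two_left.mpr hodd)) ha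
  · refine prod_congr rfl fun k _ => ?_
    have : ((ℓ + n : ℕ) : ℤ) - 1 - 2 * ((ℓ + k : ℕ) : ℤ) = (n : ℤ) - 1 - 2 * k + ℓ * (-1) := by
      push_cast; ring
    rw [this, zpow_add₀ hζ0, zpow_mul, zpow_natCast, hζ.pow_eq_one, one_zpow, mul_one]

theorem qbinomGen_mul_add {ℓ : ℕ} (hodd : Odd ℓ) {ζ : ℂ} (hζ : IsPrimitiveRoot ζ ℓ) (q r : ℕ) :
    qbinomGen ζ (ℓ * q + r) = (X ^ ℓ + 1) ^ q * qbinomGen ζ r := by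
  induction q with
  | zero => simp
  | succ q ih =>
    rw [mul_add_one, add_right_comm, qbinomGen_add_period hodd hζ, ih, pow_succ', mul_assoc]

theorem qbinom_lucas_general (ℓ : ℕ) (hodd : Odd ℓ) (ζ : ℂ)
    (hζ : IsPrimitiveRoot ζ ℓ)
    (n m n₁ n₀ m₁ m₀ : ℕ) (hn : n = ℓ * n₁ + n₀) (hn₀ : n₀ < ℓ)
    (hm : m = ℓ * m₁ + m₀) (hm₀ : m₀ < ℓ) :
    (m₀ ≤ n₀ → qbinomC ζ n m = (n₁.choose m₁ : ℂ) * qbinomC ζ n₀ m₀) ∧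
    (m ≤ n → n₀ < m₀ → qbinomC ζ n m = 0) := by
  have hζ0 := hζ.ne_zero hodd.pos.ne'
  have hlucas : qbinomC ζ n m = n₁.choose m₁ * qbinomC ζ n₀ m₀ := by
    rw [hn, hm, ← coeff_qbinomGen hζ0, qbinomGen_mul_add hodd hζ,
      coeff_X_pow_add_one_pow_mul ((natDegree_qbinomGen_le hζ0 n₀).trans_lt hn₀) _ _ hm₀,
      coeff_qbinomGen hζ0]
  exact ⟨fun _ => hlucas, fun _ h => by rw [hlucas, qbinomC_eq_zero_of_lt ζ h, mul_zero]⟩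

/-- The `q`-Lucas theorem in the balanced convention: writing `n = ℓn₁ + n₀`, `m = ℓm₁ + m₀`
with `0 ≤ n₀, m₀ < ℓ`, we have `[n choose m]_ζ = (n₁ choose m₁) [n₀ choose m₀]_ζ` if `m₀ ≤ n₀`,
and `[n choose m]_ζ = 0` if `m ≤ n` and `m₀ > n₀`. -/
theorem qbinom_lucas (ℓ : ℕ) (hℓ : 0 < ℓ) (hodd : Odd ℓ) (ζ : ℂ)
    (hζ : IsPrimitiveRoot ζ ℓ)
    (n m n₁ n₀ m₁ m₀ : ℕ) (hn : n = ℓ * n₁ + n₀) (hn₀ : n₀ < ℓ)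
    (hm : m = ℓ * m₁ + m₀) (hm₀ : m₀ < ℓ) :
    (m₀ ≤ n₀ → qbinomC ζ n m = (n₁.choose m₁ : ℂ) * qbinomC ζ n₀ m₀) ∧
    (m ≤ n → n₀ < m₀ → qbinomC ζ n m = 0) :=
  qbinom_lucas_general ℓ hodd ζ hζ n m n₁ n₀ m₁ m₀ hn hn₀ hm hm₀
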